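/- Lower gradient bound for the generating functional (finite form): let S̃ and Q be Hermitian n×n complex matrices and suppose Tr[exp(−S̃)] ≤ 1. Then −ln Tr[exp(−(S̃ + Q))] ≥ Tr[exp(−(S̃ + Q)) * Q] / Tr[exp(−(S̃ + Q))], where all traces are real and Tr exp(−(S̃+Q)) > 0. (Taking Q = ∑ₙ fₙ Pₙ, this is the inequality Ψ_ε(t; f) ≥ ∑ₙ fₙ ∂Ψ_ε(t; f)/∂fₙ.) -/

import Mathlib

open Matrix NormedSpace

/-! With `B = -(S̃ + Q)` and `C = -S̃` the claim is the Peierls–Bogoliubov inequality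
`Tr[e^B (C - B)] / Tr e^B ≤ log Tr e^C - log Tr e^B`, combined with `log Tr e^C ≤ 0`. -/

lemma Real.exp_mul_sub_le_exp_sub_exp (b c : ℝ) :
    Real.exp b * (c - b) ≤ Real.exp c - Real.exp b := by
  have h := mul_le_mul_of_nonneg_left (Real.add_one_le_exp (c - b)) (Real.exp_pos b).le
  rw [← Real.exp_add, add_sub_cancel] at h
  linarith

namespace Matrix

variable {n : Type*} [Fintype n]

lemma IsHermitian.im_trace_mul_eq_zero {A B : Matrix n n ℂ} (hA : A.IsHermitian)
    (hB : B.IsHermitian) : (trace (A * B)).im = 0 := by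
  refine Complex.conj_eq_iff_im.mp (?_ : star (trace (A * B)) = _)
  rw [← trace_conjTranspose, conjTranspose_mul, hA.eq, hB.eq, trace_mul_comm]

variable [DecidableEq n]

lemma sum_normSq_row_of_mem_unitaryGroup {W : Matrix n n ℂ} (hW : W ∈ unitaryGroup n ℂ)
    (i : n) :
    ∑ j, Complex.normSq (W i j) = 1 := by
  have h := congr_fun (congr_fun ((mem_unitaryGroup_iff).mp hW) i) i
  simp only [mul_apply, star_apply, Complex.star_def, Complex.mul_conj, one_apply_eq] at h
  exact_mod_cast h

lemma sum_normSq_col_of_mem_unitaryGroup {W : Matrix n n ℂ} (hW : W ∈ unitaryGroup n ℂ)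
    (j : n) :
    ∑ i, Complex.normSq (W i j) = 1 := by
  simpa [star_apply, Complex.star_def] using
    sum_normSq_row_of_mem_unitaryGroup (Unitary.star_mem hW) j

lemma trace_conj_diagonal_mul_conj_diagonal (U V : Matrix n n ℂ) (d e : n → ℂ) :
    trace (U * diagonal d * star U * (V * diagonal e * star V)) =
      ∑ i, ∑ j, d i * e j * Complex.normSq ((star U * V) i j) := by
  have h_cycle : trace (U * diagonal d * star U * (V * diagonal e * star V)) =
      trace (diagonal d * (star U * V) * diagonal e * star (star U * V)) := calc
    _ = trace (U * (diagonal d * (star U * V) * diagonal e * star V)) := by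
      simp only [Matrix.mul_assoc]
    _ = _ := by rw [trace_mul_comm, star_mul, star_star, Matrix.mul_assoc]
  rw [h_cycle]
  simp only [trace, diag, mul_apply, diagonal_apply, star_apply, ite_mul, zero_mul,
    Finset.sum_ite_eq, Finset.mem_univ, if_true]
  refine Finset.sum_congr rfl fun i _ => Finset.sum_congr rfl fun j _ => ?_
  rw [Finset.sum_eq_single j (fun b _ hb => by simp [hb]) (by simp)]
  simp only [RCLike.star_def, ↓reduceIte, star_sum, star_mul', RingHomCompTriple.comp_apply,
    RingHom.id_apply, ← Complex.mul_conj, map_sum, map_mul]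
  ring

lemma IsHermitian.exp_eq {A : Matrix n n ℂ} (hA : A.IsHermitian) :
    NormedSpace.exp A = (hA.eigenvectorUnitary : Matrix n n ℂ) *
      diagonal (fun i => (Real.exp (hA.eigenvalues i) : ℂ)) *
      star (hA.eigenvectorUnitary : Matrix n n ℂ) := by
  set U := (hA.eigenvectorUnitary : Matrix n n ℂ)
  have hU_inv : U⁻¹ = star U :=
    inv_eq_left_inv (mem_unitaryGroup_iff'.mp hA.eigenvectorUnitary.2)
  have hU : IsUnit U := (isUnit_iff_isUnit_det U).mpr (UnitaryGroup.det_isUnit _)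
  conv_lhs => rw [hA.spectral_theorem, Unitary.conjStarAlgAut_apply, ← hU_inv]
  rw [exp_conj _ _ hU, hU_inv, exp_diagonal]
  congr 3
  ext i
  simp [← Complex.exp_eq_exp_ℂ, Complex.ofReal_exp]

lemma IsHermitian.re_trace_exp {A : Matrix n n ℂ} (hA : A.IsHermitian) :
    (trace (NormedSpace.exp A)).re = ∑ i, Real.exp (hA.eigenvalues i) := by
  rw [hA.exp_eq, trace_mul_comm, ← Matrix.mul_assoc,
    mem_unitaryGroup_iff'.mp hA.eigenvectorUnitary.2, Matrix.one_mul, trace_diagonal,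
    Complex.re_sum]
  simp only [Complex.ofReal_re]

lemma IsHermitian.re_trace_exp_pos [Nonempty n] {A : Matrix n n ℂ} (hA : A.IsHermitian) :
    0 < (trace (NormedSpace.exp A)).re := by
  rw [hA.re_trace_exp]
  exact Finset.sum_pos (fun i _ => Real.exp_pos _) Finset.univ_nonempty

lemma IsHermitian.re_trace_exp_mul {B C : Matrix n n ℂ} (hB : B.IsHermitian)
    (hC : C.IsHermitian) :
    (trace (NormedSpace.exp B * C)).re =
      ∑ i, ∑ j, Real.exp (hB.eigenvalues i) * hC.eigenvalues j *
      Complex.normSq ((star (hB.eigenvectorUnitary : Matrix n n ℂ) *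
        (hC.eigenvectorUnitary : Matrix n n ℂ)) i j) := by
  conv_lhs => rw [hB.exp_eq, hC.spectral_theorem, Unitary.conjStarAlgAut_apply]
  rw [trace_conj_diagonal_mul_conj_diagonal, Complex.re_sum]
  refine Finset.sum_congr rfl fun i _ => ?_
  rw [Complex.re_sum]
  refine Finset.sum_congr rfl fun j _ => ?_
  simp [Complex.exp_ofReal_re]

lemma IsHermitian.re_trace_exp_mul_self {A : Matrix n n ℂ} (hA : A.IsHermitian) :
    (trace (NormedSpace.exp A * A)).re = ∑ i, Real.exp (hA.eigenvalues i) * hA.eigenvalues i := by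
  rw [hA.re_trace_exp_mul hA, mem_unitaryGroup_iff'.mp hA.eigenvectorUnitary.2]
  refine Finset.sum_congr rfl fun i _ => ?_
  rw [Finset.sum_eq_single i (fun j _ hj => by simp [one_apply_ne' hj]) (by simp)]
  simp

/-- Klein's inequality `Tr[e^B (C + s - B)] ≤ Tr e^(C + s) - Tr e^B`, with the shift `s` carried
by the eigenvalues of `C`: in the eigenbases of `B` and `C` both sides are averages, against the
doubly stochastic matrix `|⟨uᵢ, vⱼ⟩|²`, of the scalar inequality `e^b (c - b) ≤ e^c - e^b`. -/
lemma IsHermitian.re_trace_exp_mul_sub_le {B C : Matrix n n ℂ} (hB : B.IsHermitian)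
    (hC : C.IsHermitian) (s : ℝ) :
    (trace (NormedSpace.exp B * (C - B))).re + s * (trace (NormedSpace.exp B)).re ≤
      Real.exp s * (trace (NormedSpace.exp C)).re - (trace (NormedSpace.exp B)).re := by
  set b := hB.eigenvalues
  set c := hC.eigenvalues
  set W := star (hB.eigenvectorUnitary : Matrix n n ℂ) * (hC.eigenvectorUnitary : Matrix n n ℂ)
  have hW : W ∈ unitaryGroup n ℂ := by
    simpa using (hB.eigenvectorUnitary⁻¹ * hC.eigenvectorUnitary).2
  set p := fun i j => Complex.normSq (W i j)
  have h_trace_B : (trace (NormedSpace.exp B)).re = ∑ i, ∑ j, p i j * Real.exp (b i) := by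
    simp only [hB.re_trace_exp, ← Finset.sum_mul, p, sum_normSq_row_of_mem_unitaryGroup hW,
      one_mul, b]
  have h_trace_C : (trace (NormedSpace.exp C)).re = ∑ i, ∑ j, p i j * Real.exp (c j) := by
    simp only [hC.re_trace_exp, Finset.sum_comm (γ := n), ← Finset.sum_mul, p,
      sum_normSq_col_of_mem_unitaryGroup hW, one_mul, c]
  have h_trace_BC : (trace (NormedSpace.exp B * C)).re =
      ∑ i, ∑ j, p i j * (Real.exp (b i) * c j) := by
    simp only [hB.re_trace_exp_mul hC, mul_comm (p _ _), p, b, c, W]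
  have h_trace_BB : (trace (NormedSpace.exp B * B)).re =
      ∑ i, ∑ j, p i j * (Real.exp (b i) * b i) := by
    simp only [hB.re_trace_exp_mul_self, ← Finset.sum_mul, p,
      sum_normSq_row_of_mem_unitaryGroup hW, one_mul, b]
  calc (trace (NormedSpace.exp B * (C - B))).re + s * (trace (NormedSpace.exp B)).re
      = ∑ i, ∑ j, p i j * (Real.exp (b i) * (c j + s - b i)) := by
        rw [Matrix.mul_sub, trace_sub, Complex.sub_re, h_trace_BC, h_trace_BB, h_trace_B]
        simp only [Finset.mul_sum, ← Finset.sum_sub_distrib, ← Finset.sum_add_distrib]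
        exact Finset.sum_congr rfl fun i _ => Finset.sum_congr rfl fun j _ => by ring
    _ ≤ ∑ i, ∑ j, p i j * (Real.exp (c j + s) - Real.exp (b i)) := by
        gcongr with i _ j _
        · exact Complex.normSq_nonneg _
        · exact Real.exp_mul_sub_le_exp_sub_exp _ _
    _ = Real.exp s * (trace (NormedSpace.exp C)).re - (trace (NormedSpace.exp B)).re := by
        rw [h_trace_C, h_trace_B]
        simp only [Finset.mul_sum, ← Finset.sum_sub_distrib]
        exact Finset.sum_congr rfl fun i _ => Finset.sum_congr rfl fun j _ => by
          rw [Real.exp_add]; ring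

/-- The Peierls–Bogoliubov inequality; it is Klein's inequality for the shift `s` that makes
`e^s Tr e^C = Tr e^B`. -/
lemma IsHermitian.re_trace_exp_mul_sub_div_le [Nonempty n] {B C : Matrix n n ℂ}
    (hB : B.IsHermitian) (hC : C.IsHermitian) :
    (trace (NormedSpace.exp B * (C - B))).re / (trace (NormedSpace.exp B)).re ≤
      Real.log (trace (NormedSpace.exp C)).re - Real.log (trace (NormedSpace.exp B)).re := by
  have hZ_B := hB.re_trace_exp_pos
  have hZ_C := hC.re_trace_exp_pos
  have h_klein := hB.re_trace_exp_mul_sub_le hC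
    (Real.log (trace (NormedSpace.exp B)).re - Real.log (trace (NormedSpace.exp C)).re)
  rw [Real.exp_sub, Real.exp_log hZ_B, Real.exp_log hZ_C, div_mul_cancel₀ _ hZ_C.ne'] at h_klein
  rw [div_le_iff₀ hZ_B]
  linarith

end Matrix

/-- Lower gradient bound for the generating functional (finite form):
if `Tr exp (-S̃) ≤ 1`, then `Ψ(f) = -ln Tr exp (-(S̃ + Q))` dominates the
"gradient term" `Tr[exp (-(S̃ + Q)) Q] / Tr exp (-(S̃ + Q))`. -/
theorem generating_functional_lower_bound
    {n : Type*} [Fintype n] [DecidableEq n] [Nonempty n]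
    (Stilde Q : Matrix n n ℂ) (hS : Stildeᴴ = Stilde) (hQ : Qᴴ = Q)
    (hnorm : (trace (exp (-Stilde))).re ≤ 1) :
    0 < (trace (exp (-(Stilde + Q)))).re ∧
    (trace (exp (-(Stilde + Q)) * Q)).im = 0 ∧
    (trace (exp (-(Stilde + Q)) * Q)).re / (trace (exp (-(Stilde + Q)))).re ≤
      -Real.log (trace (exp (-(Stilde + Q)))).re := by
  have hB : (-(Stilde + Q)).IsHermitian := (IsHermitian.add hS hQ).neg
  have hC : (-Stilde).IsHermitian := IsHermitian.neg hS
  refine ⟨hB.re_trace_exp_pos, hB.exp.im_trace_mul_eq_zero hQ, ?_⟩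
  have h_log_nonpos : Real.log (trace (exp (-Stilde))).re ≤ 0 :=
    Real.log_nonpos hC.re_trace_exp_pos.le hnorm
  have h_gibbs := hB.re_trace_exp_mul_sub_div_le hC
  rw [show -Stilde - -(Stilde + Q) = Q by abel] at h_gibbs
  linarith
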